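/- arXiv:1408.6285 — 2 statements merged into one kernel-verified Lean document; each statement's English description precedes it below -/
import Mathlib

section
/- If X and Y are independent random variables and Z is jointly distributed with (X,Y), then for any random variable Q with (X,Z) - Q - (Y,Z) a Markov chain, I(X,Z;Q|Y,Z) + I(Y,Z;Q|X,Z) ≥ I(X,Y;Q) - 2. -/
namespace Paper

open Classical in
/-- Probability of an event under a pmf `μ` on a finite sample space. -/
noncomputable def pe {Ω : Type*} [Fintype Ω] (μ : Ω → ℝ) (E : Ω → Prop) : ℝ :=
  ∑ ω, if E ω then μ ω else 0

/-- Probability that random variable `X` takes value `a`. -/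
noncomputable def prob {Ω α : Type*} [Fintype Ω] (μ : Ω → ℝ) (X : Ω → α) (a : α) : ℝ :=
  pe μ (fun ω => X ω = a)

/-- `μ` is a probability mass function. -/
def IsPMF {Ω : Type*} [Fintype Ω] (μ : Ω → ℝ) : Prop :=
  (∀ ω, 0 ≤ μ ω) ∧ ∑ ω, μ ω = 1

open Classical in
/-- Shannon entropy (in bits) of the random variable `X` under `μ`. -/
noncomputable def H {Ω α : Type*} [Fintype Ω] (μ : Ω → ℝ) (X : Ω → α) : ℝ :=
  -∑ a ∈ Finset.univ.image X, prob μ X a * Real.logb 2 (prob μ X a)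

/-- Mutual information `I(X;Y)` in bits. -/
noncomputable def mutInfo {Ω α β : Type*} [Fintype Ω] (μ : Ω → ℝ)
    (X : Ω → α) (Y : Ω → β) : ℝ :=
  H μ X + H μ Y - H μ (fun ω => (X ω, Y ω))

/-- Conditional entropy `H(X|Y)` in bits. -/
noncomputable def condEnt {Ω α β : Type*} [Fintype Ω] (μ : Ω → ℝ)
    (X : Ω → α) (Y : Ω → β) : ℝ :=
  H μ (fun ω => (X ω, Y ω)) - H μ Y

/-- Conditional mutual information `I(X;Y|Z)` in bits. -/
noncomputable def condMutInfo {Ω α β γ : Type*} [Fintype Ω] (μ : Ω → ℝ)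
    (X : Ω → α) (Y : Ω → β) (Z : Ω → γ) : ℝ :=
  H μ (fun ω => (X ω, Z ω)) + H μ (fun ω => (Y ω, Z ω))
    - H μ (fun ω => (X ω, Y ω, Z ω)) - H μ Z

end Paper

/-!
Since `I(X,Z;Q|Y,Z) = I(X;Q|Y,Z)`, the point is that conditioning on one more bit changes a
conditional mutual information by at most one bit:
`I(X;Q|Y) = I(X;Q|Y,Z) + I(X;Z|Y) - I(X;Z|Y,Q) ≤ I(X;Q|Y,Z) + H(Z)`, and symmetrically.
By the chain rule `I(X,Y;Q) = I(X;Q) + I(Y;Q|X)`, and when `X ⟂ Y` we have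
`I(X;Q|Y) - I(X;Q) = I(X;Y|Q) ≥ 0`. Every inequality used reduces to Gibbs' inequality.
-/

namespace Paper

open Finset Real

lemma mul_log_sub_mul_log_le {p r : ℝ} (hp : 0 ≤ p) (hr : 0 ≤ r) (hpr : 0 < p → 0 < r) :
    p * log r - p * log p ≤ r - p := by
  rcases hp.eq_or_lt with rfl | hp
  · simpa using hr
  · have hr := hpr hp
    calc p * log r - p * log p = p * log (r / p) := by
          rw [log_div hr.ne' hp.ne']; ring
      _ ≤ p * (r / p - 1) :=
          mul_le_mul_of_nonneg_left (log_le_sub_one_of_pos (by positivity)) hp.le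
      _ = r - p := by field_simp

-- `pe` and `H` are defined with classical decidability; this makes the `if`s and `univ.image`s
-- below elaborate to the same instances.
attribute [local instance 2000] Classical.propDecidable

variable {Ω α β γ δ : Type*} [Fintype Ω] {μ : Ω → ℝ}

lemma pe_mono (hμ : ∀ ω, 0 ≤ μ ω) {E F : Ω → Prop} (h : ∀ ω, E ω → F ω) :
    pe μ E ≤ pe μ F :=
  sum_le_sum fun ω _ => by
    by_cases hE : E ω
    · rw [if_pos hE, if_pos (h ω hE)]
    · rw [if_neg hE]; split_ifs <;> simp [hμ ω]

lemma prob_nonneg (hμ : ∀ ω, 0 ≤ μ ω) (X : Ω → α) (a : α) : 0 ≤ prob μ X a :=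
  sum_nonneg fun ω _ => by split_ifs <;> simp [hμ ω]

lemma prob_le_prob_comp (hμ : ∀ ω, 0 ≤ μ ω) (X : Ω → α) (f : α → β) (a : α) :
    prob μ X a ≤ prob μ (fun ω => f (X ω)) (f a) :=
  pe_mono hμ fun _ h => congrArg f h

lemma le_prob_self (hμ : ∀ ω, 0 ≤ μ ω) (X : Ω → α) (ω₀ : Ω) : μ ω₀ ≤ prob μ X (X ω₀) := by
  simpa [prob, pe] using single_le_sum (f := fun ω => if X ω = X ω₀ then μ ω else 0)
    (fun ω _ => by split_ifs <;> simp [hμ ω]) (mem_univ ω₀)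

lemma sum_mul_comp (X : Ω → α) (g : α → ℝ) :
    ∑ ω, μ ω * g (X ω) = ∑ a ∈ univ.image X, prob μ X a * g a := by
  simp only [prob, pe, sum_mul, ite_mul, zero_mul]
  rw [sum_comm]
  refine sum_congr rfl fun ω _ => ?_
  rw [sum_ite_eq, if_pos (mem_image_of_mem X (mem_univ ω))]

lemma sum_image_prob_eq_one (hμ : IsPMF μ) (X : Ω → α) :
    ∑ a ∈ univ.image X, prob μ X a = 1 := by
  simpa [hμ.2] using (sum_mul_comp (μ := μ) X fun _ => 1).symm

lemma sum_image_prob_pair (X : Ω → α) (W : Ω → β) (w : β) :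
    ∑ a ∈ univ.image X, prob μ (fun ω => (X ω, W ω)) (a, w) = prob μ W w := by
  simp only [prob, pe, Prod.mk.injEq]
  rw [sum_comm]
  refine sum_congr rfl fun ω _ => ?_
  by_cases hw : W ω = w <;> simp [hw]

lemma H_eq_neg_sum_mul_logb (X : Ω → α) :
    H μ X = -∑ ω, μ ω * logb 2 (prob μ X (X ω)) := by
  rw [H, sum_mul_comp X fun a => logb 2 (prob μ X a)]

lemma H_congr {X : Ω → α} {Y : Ω → β} (h : ∀ ω ω', X ω = X ω' ↔ Y ω = Y ω') :
    H μ X = H μ Y := by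
  simp only [H_eq_neg_sum_mul_logb]
  congr 2 with ω
  congr 2
  exact sum_congr rfl fun ω' _ => if_congr (h ω' ω) rfl rfl

lemma H_const (hμ : IsPMF μ) (c : α) : H μ (fun _ => c) = 0 := by
  simp [H_eq_neg_sum_mul_logb, prob, pe, hμ.2]

/-- Gibbs' inequality, against a subprobability `r`. -/
lemma H_le_neg_sum_mul_logb (hμ : IsPMF μ) (T : Ω → α) (r : α → ℝ) (hr : ∀ a, 0 ≤ r a)
    (hpos : ∀ a, 0 < prob μ T a → 0 < r a) (hsum : ∑ a ∈ univ.image T, r a ≤ 1) :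
    H μ T ≤ -∑ ω, μ ω * logb 2 (r (T ω)) := by
  rw [sum_mul_comp T fun a => logb 2 (r a), H, neg_le_neg_iff]
  have hpoint : ∀ a, prob μ T a * logb 2 (r a) - prob μ T a * logb 2 (prob μ T a)
      ≤ (r a - prob μ T a) / log 2 := fun a => by
    simp only [logb, ← mul_div_assoc, ← sub_div]
    exact div_le_div_of_nonneg_right
      (mul_log_sub_mul_log_le (prob_nonneg hμ.1 T a) (hr a) (hpos a)) (log_nonneg one_le_two)
  have htotal : ∑ a ∈ univ.image T, (r a - prob μ T a) / log 2 ≤ 0 := by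
    rw [← sum_div, sum_sub_distrib, sum_image_prob_eq_one hμ]
    exact div_nonpos_of_nonpos_of_nonneg (by linarith) (log_nonneg one_le_two)
  have hgap := (sum_le_sum fun a _ => hpoint a).trans htotal
  rw [sum_sub_distrib] at hgap
  linarith

lemma sum_prob_mul_prob_div_prob_le_one (hμ : IsPMF μ) (X : Ω → α) (Y : Ω → β) (Z : Ω → γ) :
    ∑ t ∈ univ.image (fun ω => (X ω, Y ω, Z ω)), prob μ (fun ω => (X ω, Z ω)) (t.1, t.2.2)
      * prob μ (fun ω => (Y ω, Z ω)) t.2 / prob μ Z t.2.2 ≤ 1 := by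
  set XZ := fun ω => (X ω, Z ω)
  set YZ := fun ω => (Y ω, Z ω)
  set r : α × β × γ → ℝ := fun t => prob μ XZ (t.1, t.2.2) * prob μ YZ t.2 / prob μ Z t.2.2
  have hsub : univ.image (fun ω => (X ω, Y ω, Z ω))
      ⊆ univ.image X ×ˢ (univ.image Y ×ˢ univ.image Z) := by
    intro t ht
    obtain ⟨ω, -, rfl⟩ := mem_image.mp ht
    simp
  have hfull : ∑ t ∈ univ.image X ×ˢ (univ.image Y ×ˢ univ.image Z), r t = 1 :=
    calc ∑ t ∈ univ.image X ×ˢ (univ.image Y ×ˢ univ.image Z), r t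
        = ∑ z ∈ univ.image Z, (∑ x ∈ univ.image X, prob μ XZ (x, z))
            * (∑ y ∈ univ.image Y, prob μ YZ (y, z)) / prob μ Z z := by
          simp only [sum_product, sum_mul_sum, sum_div, r]
          conv_lhs => enter [2, x]; rw [sum_comm]
          rw [sum_comm]
      _ = ∑ z ∈ univ.image Z, prob μ Z z * prob μ Z z / prob μ Z z := by
          simp only [XZ, YZ, sum_image_prob_pair]
      _ = 1 := by simp only [mul_self_div_self, sum_image_prob_eq_one hμ]
  exact hfull ▸ sum_le_sum_of_subset_of_nonneg hsub fun t _ _ => div_nonneg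
    (mul_nonneg (prob_nonneg hμ.1 _ _) (prob_nonneg hμ.1 _ _)) (prob_nonneg hμ.1 _ _)

lemma condMutInfo_nonneg (hμ : IsPMF μ) (X : Ω → α) (Y : Ω → β) (Z : Ω → γ) :
    0 ≤ condMutInfo μ X Y Z := by
  set XZ := fun ω => (X ω, Z ω)
  set YZ := fun ω => (Y ω, Z ω)
  set T := fun ω => (X ω, Y ω, Z ω)
  set r : α × β × γ → ℝ := fun t => prob μ XZ (t.1, t.2.2) * prob μ YZ t.2 / prob μ Z t.2.2
  have hr : ∀ t, 0 ≤ r t := fun t => div_nonneg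
    (mul_nonneg (prob_nonneg hμ.1 _ _) (prob_nonneg hμ.1 _ _)) (prob_nonneg hμ.1 _ _)
  have hpos : ∀ t, 0 < prob μ T t → 0 < r t := fun t ht =>
    div_pos (mul_pos (ht.trans_le (prob_le_prob_comp hμ.1 T (fun t => (t.1, t.2.2)) t))
      (ht.trans_le (prob_le_prob_comp hμ.1 T Prod.snd t)))
      (ht.trans_le (prob_le_prob_comp hμ.1 T (fun t => t.2.2) t))
  have hsum : ∑ t ∈ univ.image T, r t ≤ 1 := sum_prob_mul_prob_div_prob_le_one hμ X Y Z
  have hcross := H_le_neg_sum_mul_logb hμ T r hr hpos hsum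
  have hsplit : ∀ ω, μ ω * logb 2 (r (T ω)) = μ ω * logb 2 (prob μ XZ (XZ ω))
      + μ ω * logb 2 (prob μ YZ (YZ ω)) - μ ω * logb 2 (prob μ Z (Z ω)) := fun ω => by
    rcases (hμ.1 ω).eq_or_lt with h0 | h0
    · simp [← h0]
    · have h1 := h0.trans_le (le_prob_self hμ.1 XZ ω)
      have h2 := h0.trans_le (le_prob_self hμ.1 YZ ω)
      have h3 := h0.trans_le (le_prob_self hμ.1 Z ω)
      simp only [r, T, XZ, YZ] at h1 h2 ⊢
      rw [logb_div (by positivity) h3.ne', logb_mul h1.ne' h2.ne']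
      ring
  simp only [hsplit, sum_add_distrib, sum_sub_distrib] at hcross
  change 0 ≤ H μ XZ + H μ YZ - H μ T - H μ Z
  rw [H_eq_neg_sum_mul_logb XZ, H_eq_neg_sum_mul_logb YZ, H_eq_neg_sum_mul_logb Z]
  linarith

lemma mutInfo_nonneg (hμ : IsPMF μ) (X : Ω → α) (Y : Ω → β) : 0 ≤ mutInfo μ X Y := by
  have h := condMutInfo_nonneg hμ X Y fun _ => ()
  have hX : H μ (fun ω => (X ω, ())) = H μ X := H_congr fun ω ω' => by simp
  have hY : H μ (fun ω => (Y ω, ())) = H μ Y := H_congr fun ω ω' => by simp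
  have hXY : H μ (fun ω => (X ω, Y ω, ())) = H μ (fun ω => (X ω, Y ω)) :=
    H_congr fun ω ω' => by simp
  rw [condMutInfo, hX, hY, hXY, H_const hμ, sub_zero] at h
  exact h

lemma H_le_H_pair (hμ : IsPMF μ) (X : Ω → α) (Y : Ω → β) :
    H μ Y ≤ H μ (fun ω => (X ω, Y ω)) := by
  have h := condMutInfo_nonneg hμ X X Y
  have hXXY : H μ (fun ω => (X ω, X ω, Y ω)) = H μ (fun ω => (X ω, Y ω)) :=
    H_congr fun ω ω' => by simp
  rw [condMutInfo, hXXY] at h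
  linarith

lemma H_le_logb_card [Fintype α] [Nonempty α] (hμ : IsPMF μ) (X : Ω → α) :
    H μ X ≤ logb 2 (Fintype.card α) := by
  have hcard : (0 : ℝ) < Fintype.card α := by exact_mod_cast Fintype.card_pos
  have hsum : ∑ _a ∈ univ.image X, (Fintype.card α : ℝ)⁻¹ ≤ 1 := by
    rw [sum_const, nsmul_eq_mul, ← div_eq_mul_inv, div_le_one hcard]
    exact_mod_cast card_le_univ _
  have h := H_le_neg_sum_mul_logb hμ X (fun _ => (Fintype.card α : ℝ)⁻¹)
    (fun _ => by positivity) (fun _ _ => by positivity) hsum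
  rwa [← sum_mul, hμ.2, one_mul, logb_inv, neg_neg] at h

lemma H_pair_eq_add_of_indep (hμ : IsPMF μ) (X : Ω → α) (Y : Ω → β)
    (hind : ∀ x y, prob μ (fun ω => (X ω, Y ω)) (x, y) = prob μ X x * prob μ Y y) :
    H μ (fun ω => (X ω, Y ω)) = H μ X + H μ Y := by
  simp only [H_eq_neg_sum_mul_logb, ← neg_add, ← sum_add_distrib, ← mul_add, hind]
  congr 1
  refine sum_congr rfl fun ω _ => ?_
  rcases (hμ.1 ω).eq_or_lt with h0 | h0
  · simp [← h0]
  · rw [logb_mul (h0.trans_le (le_prob_self hμ.1 X ω)).ne'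
      (h0.trans_le (le_prob_self hμ.1 Y ω)).ne']

lemma condMutInfo_sub_H_le_condMutInfo_pair (hμ : IsPMF μ)
    (X : Ω → α) (Y : Ω → β) (Z : Ω → γ) (Q : Ω → δ) :
    condMutInfo μ X Q Y - H μ Z
      ≤ condMutInfo μ (fun ω => (X ω, Z ω)) Q (fun ω => (Y ω, Z ω)) := by
  have hXZ_QY := condMutInfo_nonneg hμ X Z fun ω => (Q ω, Y ω)
  have hXY := H_le_H_pair hμ Z fun ω => (X ω, Y ω)
  have hYZ := mutInfo_nonneg hμ Y Z
  have e₁ : H μ (fun ω => ((X ω, Z ω), (Y ω, Z ω))) = H μ (fun ω => (Z ω, X ω, Y ω)) :=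
    H_congr fun ω ω' => by simp only [Prod.mk.injEq]; tauto
  have e₂ : H μ (fun ω => (Q ω, Y ω, Z ω)) = H μ (fun ω => (Z ω, Q ω, Y ω)) :=
    H_congr fun ω ω' => by simp only [Prod.mk.injEq]; tauto
  have e₃ : H μ (fun ω => ((X ω, Z ω), Q ω, (Y ω, Z ω))) = H μ (fun ω => (X ω, Z ω, Q ω, Y ω)) :=
    H_congr fun ω ω' => by simp only [Prod.mk.injEq]; tauto
  rw [condMutInfo] at hXZ_QY
  rw [mutInfo] at hYZ
  rw [condMutInfo, condMutInfo, e₁, e₂, e₃]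
  linarith

lemma mutInfo_pair_eq_add_condMutInfo (X : Ω → α) (Y : Ω → β) (Q : Ω → γ) :
    mutInfo μ (fun ω => (X ω, Y ω)) Q = mutInfo μ X Q + condMutInfo μ Y Q X := by
  have e₁ : H μ (fun ω => (Y ω, X ω)) = H μ (fun ω => (X ω, Y ω)) :=
    H_congr fun ω ω' => by simp only [Prod.mk.injEq]; tauto
  have e₂ : H μ (fun ω => (Q ω, X ω)) = H μ (fun ω => (X ω, Q ω)) :=
    H_congr fun ω ω' => by simp only [Prod.mk.injEq]; tauto
  have e₃ : H μ (fun ω => (Y ω, Q ω, X ω)) = H μ (fun ω => ((X ω, Y ω), Q ω)) :=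
    H_congr fun ω ω' => by simp only [Prod.mk.injEq]; tauto
  rw [mutInfo, mutInfo, condMutInfo, e₁, e₂, e₃]
  ring

lemma mutInfo_le_condMutInfo_of_indep (hμ : IsPMF μ) (X : Ω → α) (Y : Ω → β) (Q : Ω → γ)
    (hind : ∀ x y, prob μ (fun ω => (X ω, Y ω)) (x, y) = prob μ X x * prob μ Y y) :
    mutInfo μ X Q ≤ condMutInfo μ X Q Y := by
  have hXY_Q := condMutInfo_nonneg hμ X Y Q
  have e₁ : H μ (fun ω => (Q ω, Y ω)) = H μ (fun ω => (Y ω, Q ω)) :=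
    H_congr fun ω ω' => by simp only [Prod.mk.injEq]; tauto
  have e₂ : H μ (fun ω => (X ω, Q ω, Y ω)) = H μ (fun ω => (X ω, Y ω, Q ω)) :=
    H_congr fun ω ω' => by simp only [Prod.mk.injEq]; tauto
  rw [condMutInfo] at hXY_Q
  rw [mutInfo, condMutInfo, e₁, e₂, H_pair_eq_add_of_indep hμ X Y hind]
  linarith

theorem tension_terms_ge_mutInfo_sub_two_general {Ω 𝒳 𝒴 𝒬 : Type} [Fintype Ω]
    (μ : Ω → ℝ) (hμ : IsPMF μ)
    (X : Ω → 𝒳) (Y : Ω → 𝒴) (Z : Ω → Bool) (Q : Ω → 𝒬)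
    (hind : ∀ x y, prob μ (fun ω => (X ω, Y ω)) (x, y) = prob μ X x * prob μ Y y) :
    condMutInfo μ (fun ω => (X ω, Z ω)) Q (fun ω => (Y ω, Z ω))
      + condMutInfo μ (fun ω => (Y ω, Z ω)) Q (fun ω => (X ω, Z ω))
      ≥ mutInfo μ (fun ω => (X ω, Y ω)) Q - 2 := by
  have hX := condMutInfo_sub_H_le_condMutInfo_pair hμ X Y Z Q
  have hY := condMutInfo_sub_H_le_condMutInfo_pair hμ Y X Z Q
  have hchain := mutInfo_pair_eq_add_condMutInfo (μ := μ) X Y Q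
  have hindep := mutInfo_le_condMutInfo_of_indep hμ X Y Q hind
  have hZ : H μ Z ≤ 1 := by simpa using H_le_logb_card hμ Z
  linarith

/-- if `X ⟂ Y`, `Z` is binary, and `(X,Z) - Q - (Y,Z)` is a Markov
chain, then `I(X,Z;Q|Y,Z) + I(Y,Z;Q|X,Z) ≥ I(X,Y;Q) - 2`. -/
theorem tension_terms_ge_mutInfo_sub_two {Ω 𝒳 𝒴 𝒬 : Type} [Fintype Ω]
    (μ : Ω → ℝ) (hμ : IsPMF μ)
    (X : Ω → 𝒳) (Y : Ω → 𝒴) (Z : Ω → Bool) (Q : Ω → 𝒬)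
    (hind : ∀ x y, prob μ (fun ω => (X ω, Y ω)) (x, y) = prob μ X x * prob μ Y y)
    (hMarkov : condMutInfo μ (fun ω => (X ω, Z ω)) (fun ω => (Y ω, Z ω)) Q = 0) :
    condMutInfo μ (fun ω => (X ω, Z ω)) Q (fun ω => (Y ω, Z ω))
      + condMutInfo μ (fun ω => (Y ω, Z ω)) Q (fun ω => (X ω, Z ω))
      ≥ mutInfo μ (fun ω => (X ω, Y ω)) Q - 2 :=
  tension_terms_ge_mutInfo_sub_two_general μ hμ X Y Z Q hind

end Paper
end

section
/- For a pair of finite random variables (X,Y), the tension region 𝔗(X;Y) = {(r₁,r₂,r₃) ∈ ℝ₊³ : ∃ Q with I(Y;Q|X) ≤ r₁, I(X;Q|Y) ≤ r₂, I(X;Y|Q) ≤ r₃} is a convex subset of ℝ₊³. -/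
namespace Paper

/-- The tension region `𝔗(X;Y) ⊆ ℝ₊³`: the set of `(r₁,r₂,r₃)` such that some
`Q` (on a finite alphabet, wlog `Fin n`) jointly distributed with `(X,Y)`
satisfies `I(Y;Q|X) ≤ r₁`, `I(X;Q|Y) ≤ r₂`, `I(X;Y|Q) ≤ r₃`. -/
def Rtens {𝒳 𝒴 : Type} [Fintype 𝒳] [Fintype 𝒴] (μ : 𝒳 × 𝒴 → ℝ) :
    Set (ℝ × ℝ × ℝ) :=
  {r | 0 ≤ r.1 ∧ 0 ≤ r.2.1 ∧ 0 ≤ r.2.2 ∧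
    ∃ (n : ℕ) (ν : 𝒳 × 𝒴 × Fin n → ℝ), IsPMF ν ∧
      (∀ a b, (∑ q, ν (a, b, q)) = μ (a, b)) ∧
      condMutInfo ν (fun w => w.2.1) (fun w => w.2.2) (fun w => w.1) ≤ r.1 ∧
      condMutInfo ν (fun w => w.1) (fun w => w.2.2) (fun w => w.2.1) ≤ r.2.1 ∧
      condMutInfo ν (fun w => w.1) (fun w => w.2.1) (fun w => w.2.2) ≤ r.2.2}

end Paper

namespace Paper

set_option linter.unusedSectionVars false

noncomputable def Flog (x : ℝ) : ℝ := x * Real.logb 2 x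

lemma Flog_zero : Flog 0 = 0 := by simp [Flog]

lemma Flog_mul (t x : ℝ) : Flog (t * x) = x * Flog t + t * Flog x := by
  rcases eq_or_ne t 0 with ht | ht
  · simp [Flog, ht]
  rcases eq_or_ne x 0 with hx | hx
  · simp [Flog, hx]
  · simp only [Flog, Real.logb, Real.log_mul ht hx]
    ring

open Classical in
lemma prob_def {Ω α : Type*} [Fintype Ω] (μ : Ω → ℝ) (X : Ω → α) (a : α) :
    prob μ X a = ∑ ω, if X ω = a then μ ω else 0 := rfl

open Classical in
lemma H_eq_sum {Ω α : Type*} [Fintype Ω] [Fintype α] (μ : Ω → ℝ) (X : Ω → α) :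
    H μ X = -∑ a, Flog (prob μ X a) := by
  unfold H Flog
  congr 1
  refine Finset.sum_subset (Finset.subset_univ _) ?_
  intro a _ ha
  have h : prob μ X a = 0 := by
    rw [prob_def]
    refine Finset.sum_eq_zero fun ω _ => ?_
    have : X ω ≠ a := fun h => ha (Finset.mem_image.2 ⟨ω, Finset.mem_univ ω, h⟩)
    simp [this]
  simp [h]

open Classical in
lemma sum_prob {Ω α : Type*} [Fintype Ω] [Fintype α] (μ : Ω → ℝ) (X : Ω → α) :
    ∑ a, prob μ X a = ∑ ω, μ ω := by
  simp only [prob_def]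
  rw [Finset.sum_comm]
  refine Finset.sum_congr rfl fun ω _ => ?_
  simp

lemma H_congr_prob {Ω Ω' α : Type*} [Fintype Ω] [Fintype Ω'] [Fintype α]
    (μ : Ω → ℝ) (μ' : Ω' → ℝ) (X : Ω → α) (X' : Ω' → α)
    (h : ∀ a, prob μ X a = prob μ' X' a) : H μ X = H μ' X' := by
  rw [H_eq_sum, H_eq_sum]
  simp [h]

open Classical in
lemma prob_comp_inj {Ω α β : Type*} [Fintype Ω] (μ : Ω → ℝ) (X : Ω → α)
    (e : α → β) (he : Function.Injective e) (a : α) :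
    prob μ (fun ω => e (X ω)) (e a) = prob μ X a := by
  simp only [prob_def]
  refine Finset.sum_congr rfl fun ω _ => ?_
  by_cases h : X ω = a
  · simp [h]
  · have : e (X ω) ≠ e a := fun hh => h (he hh)
    simp [h, this]

open Classical in
lemma prob_comp_notmem {Ω α β : Type*} [Fintype Ω] (μ : Ω → ℝ) (X : Ω → α)
    (e : α → β) (b : β) (hb : ∀ a, e a ≠ b) :
    prob μ (fun ω => e (X ω)) b = 0 := by
  simp only [prob_def]
  refine Finset.sum_eq_zero fun ω _ => ?_
  simp [hb (X ω)]

open Classical in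
lemma H_comp_inj {Ω α β : Type*} [Fintype Ω] [Fintype α] [Fintype β] (μ : Ω → ℝ) (X : Ω → α)
    (e : α → β) (he : Function.Injective e) :
    H μ (fun ω => e (X ω)) = H μ X := by
  rw [H_eq_sum, H_eq_sum]
  congr 1
  have h1 : ∑ b ∈ (Finset.univ : Finset α).image e,
      Flog (prob μ (fun ω => e (X ω)) b) = ∑ b : β, Flog (prob μ (fun ω => e (X ω)) b) := by
    refine Finset.sum_subset (Finset.subset_univ _) ?_
    intro b _ hb
    have : ∀ a, e a ≠ b := fun a h => hb (Finset.mem_image.2 ⟨a, Finset.mem_univ a, h⟩)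
    rw [prob_comp_notmem μ X e b this, Flog_zero]
  rw [← h1, Finset.sum_image (fun x _ y _ h => he h)]
  refine Finset.sum_congr rfl fun a _ => ?_
  rw [prob_comp_inj μ X e he]

open Classical in
lemma prob_reindex {Ω Ω' α : Type*} [Fintype Ω] [Fintype Ω'] (σ : Ω' ≃ Ω)
    (μ : Ω → ℝ) (X : Ω → α) (a : α) :
    prob (fun ω' => μ (σ ω')) (fun ω' => X (σ ω')) a = prob μ X a := by
  simp only [prob_def]
  exact Equiv.sum_comp σ (fun ω => if X ω = a then μ ω else 0)

lemma H_reindex {Ω Ω' α : Type*} [Fintype Ω] [Fintype Ω'] [Fintype α] (σ : Ω' ≃ Ω)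
    (μ : Ω → ℝ) (X : Ω → α) :
    H (fun ω' => μ (σ ω')) (fun ω' => X (σ ω')) = H μ X := by
  rw [H_eq_sum, H_eq_sum]
  simp [prob_reindex σ μ X]
open Classical in
lemma prob_sum_inl {Ω₁ Ω₂ α₁ α₂ : Type*} [Fintype Ω₁] [Fintype Ω₂]
    (μ₁ : Ω₁ → ℝ) (μ₂ : Ω₂ → ℝ) (t u : ℝ) (X₁ : Ω₁ → α₁) (X₂ : Ω₂ → α₂) (c : α₁) :
    prob (Sum.elim (fun ω => t * μ₁ ω) (fun ω => u * μ₂ ω))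
      (Sum.elim (fun ω => Sum.inl (X₁ ω)) (fun ω => Sum.inr (X₂ ω))) (Sum.inl c)
      = t * prob μ₁ X₁ c := by
  simp only [prob_def, Fintype.sum_sum_type, Sum.elim_inl, Sum.elim_inr,
    Finset.mul_sum]
  rw [Finset.sum_eq_zero (s := (Finset.univ : Finset Ω₂)) (by intro ω _; simp), add_zero]
  refine Finset.sum_congr rfl fun ω _ => ?_
  by_cases h : X₁ ω = c <;> simp [h]

open Classical in
lemma prob_sum_inr {Ω₁ Ω₂ α₁ α₂ : Type*} [Fintype Ω₁] [Fintype Ω₂]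
    (μ₁ : Ω₁ → ℝ) (μ₂ : Ω₂ → ℝ) (t u : ℝ) (X₁ : Ω₁ → α₁) (X₂ : Ω₂ → α₂) (c : α₂) :
    prob (Sum.elim (fun ω => t * μ₁ ω) (fun ω => u * μ₂ ω))
      (Sum.elim (fun ω => Sum.inl (X₁ ω)) (fun ω => Sum.inr (X₂ ω))) (Sum.inr c)
      = u * prob μ₂ X₂ c := by
  simp only [prob_def, Fintype.sum_sum_type, Sum.elim_inl, Sum.elim_inr,
    Finset.mul_sum]
  rw [Finset.sum_eq_zero (s := (Finset.univ : Finset Ω₁)) (by intro ω _; simp), zero_add]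
  refine Finset.sum_congr rfl fun ω _ => ?_
  by_cases h : X₂ ω = c <;> simp [h]

lemma H_sum_mix {Ω₁ Ω₂ α₁ α₂ : Type*} [Fintype Ω₁] [Fintype Ω₂] [Fintype α₁] [Fintype α₂]
    (μ₁ : Ω₁ → ℝ) (μ₂ : Ω₂ → ℝ) (t u : ℝ) (X₁ : Ω₁ → α₁) (X₂ : Ω₂ → α₂)
    (h₁ : ∑ ω, μ₁ ω = 1) (h₂ : ∑ ω, μ₂ ω = 1) :
    H (Sum.elim (fun ω => t * μ₁ ω) (fun ω => u * μ₂ ω))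
      (Sum.elim (fun ω => Sum.inl (X₁ ω)) (fun ω => Sum.inr (X₂ ω)))
      = t * H μ₁ X₁ + u * H μ₂ X₂ - Flog t - Flog u := by
  rw [H_eq_sum, H_eq_sum, H_eq_sum]
  rw [Fintype.sum_sum_type]
  have e1 : ∑ c : α₁, Flog (prob (Sum.elim (fun ω => t * μ₁ ω) (fun ω => u * μ₂ ω))
      (Sum.elim (fun ω => Sum.inl (X₁ ω)) (fun ω => Sum.inr (X₂ ω))) (Sum.inl c))
      = Flog t + t * ∑ c, Flog (prob μ₁ X₁ c) := by
    simp only [prob_sum_inl, Flog_mul]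
    rw [Finset.sum_add_distrib, ← Finset.sum_mul, ← Finset.mul_sum, sum_prob, h₁, one_mul]
  have e2 : ∑ c : α₂, Flog (prob (Sum.elim (fun ω => t * μ₁ ω) (fun ω => u * μ₂ ω))
      (Sum.elim (fun ω => Sum.inl (X₁ ω)) (fun ω => Sum.inr (X₂ ω))) (Sum.inr c))
      = Flog u + u * ∑ c, Flog (prob μ₂ X₂ c) := by
    simp only [prob_sum_inr, Flog_mul]
    rw [Finset.sum_add_distrib, ← Finset.sum_mul, ← Finset.mul_sum, sum_prob, h₂, one_mul]
  rw [e1, e2]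
  ring

open Classical in
lemma prob_marg {𝒳 𝒴 𝒬 γ : Type*} [Fintype 𝒳] [Fintype 𝒴] [Fintype 𝒬]
    (μ : 𝒳 × 𝒴 → ℝ) (ν : 𝒳 × 𝒴 × 𝒬 → ℝ)
    (hm : ∀ a b, (∑ q, ν (a, b, q)) = μ (a, b)) (g : 𝒳 × 𝒴 → γ) (c : γ) :
    prob ν (fun w => g (w.1, w.2.1)) c = prob μ g c := by
  simp only [prob_def, Fintype.sum_prod_type]
  refine Finset.sum_congr rfl fun a _ => Finset.sum_congr rfl fun b _ => ?_
  by_cases h : g (a, b) = c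
  · simp only [h, if_true]
    exact hm a b
  · simp [h]

lemma H_marg {𝒳 𝒴 𝒬 γ : Type*} [Fintype 𝒳] [Fintype 𝒴] [Fintype 𝒬] [Fintype γ]
    (μ : 𝒳 × 𝒴 → ℝ) (ν : 𝒳 × 𝒴 × 𝒬 → ℝ)
    (hm : ∀ a b, (∑ q, ν (a, b, q)) = μ (a, b)) (g : 𝒳 × 𝒴 → γ) :
    H ν (fun w => g (w.1, w.2.1)) = H μ g :=
  H_congr_prob _ _ _ _ (prob_marg μ ν hm g)
def mixEquiv (𝒳 𝒴 : Type) (n₁ n₂ : ℕ) :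
    ((𝒳 × 𝒴 × Fin n₁) ⊕ (𝒳 × 𝒴 × Fin n₂)) ≃ (𝒳 × 𝒴 × Fin (n₁ + n₂)) where
  toFun := Sum.elim (fun w => (w.1, w.2.1, Fin.castAdd n₂ w.2.2))
    (fun w => (w.1, w.2.1, Fin.natAdd n₁ w.2.2))
  invFun w := Fin.addCases (fun i => Sum.inl (w.1, w.2.1, i))
    (fun j => Sum.inr (w.1, w.2.1, j)) w.2.2
  left_inv := by rintro (⟨a, b, i⟩ | ⟨a, b, j⟩) <;> simp
  right_inv := by
    rintro ⟨a, b, q⟩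
    induction q using Fin.addCases <;> simp

noncomputable def mixPMF {𝒳 𝒴 : Type} {n₁ n₂ : ℕ} (ν₁ : 𝒳 × 𝒴 × Fin n₁ → ℝ)
    (ν₂ : 𝒳 × 𝒴 × Fin n₂ → ℝ) (t u : ℝ) : 𝒳 × 𝒴 × Fin (n₁ + n₂) → ℝ :=
  fun w => Sum.elim (fun ω => t * ν₁ ω) (fun ω => u * ν₂ ω) ((mixEquiv 𝒳 𝒴 n₁ n₂).symm w)

section Mix

variable {𝒳 𝒴 : Type} [Fintype 𝒳] [Fintype 𝒴] {n₁ n₂ : ℕ}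
  (ν₁ : 𝒳 × 𝒴 × Fin n₁ → ℝ) (ν₂ : 𝒳 × 𝒴 × Fin n₂ → ℝ) (t u : ℝ)

lemma mixPMF_comp :
    (fun s => mixPMF ν₁ ν₂ t u ((mixEquiv 𝒳 𝒴 n₁ n₂) s))
      = Sum.elim (fun ω => t * ν₁ ω) (fun ω => u * ν₂ ω) := by
  funext s
  simp [mixPMF]

lemma mixPMF_symm_castAdd (a : 𝒳) (b : 𝒴) (i : Fin n₁) :
    (mixEquiv 𝒳 𝒴 n₁ n₂).symm (a, b, Fin.castAdd n₂ i) = Sum.inl (a, b, i) := by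
  simp [mixEquiv]

lemma mixPMF_symm_natAdd (a : 𝒳) (b : 𝒴) (j : Fin n₂) :
    (mixEquiv 𝒳 𝒴 n₁ n₂).symm (a, b, Fin.natAdd n₁ j) = Sum.inr (a, b, j) := by
  simp [mixEquiv]

lemma mixPMF_marg (μ : 𝒳 × 𝒴 → ℝ)
    (hm₁ : ∀ a b, (∑ q, ν₁ (a, b, q)) = μ (a, b))
    (hm₂ : ∀ a b, (∑ q, ν₂ (a, b, q)) = μ (a, b))
    (htu : t + u = 1) (a : 𝒳) (b : 𝒴) :
    (∑ q, mixPMF ν₁ ν₂ t u (a, b, q)) = μ (a, b) := by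
  rw [Fin.sum_univ_add (f := fun q => mixPMF ν₁ ν₂ t u (a, b, q))]
  have h1 : ∀ i : Fin n₁, mixPMF ν₁ ν₂ t u (a, b, Fin.castAdd n₂ i) = t * ν₁ (a, b, i) := by
    intro i; rw [mixPMF, mixPMF_symm_castAdd]; rfl
  have h2 : ∀ j : Fin n₂, mixPMF ν₁ ν₂ t u (a, b, Fin.natAdd n₁ j) = u * ν₂ (a, b, j) := by
    intro j; rw [mixPMF, mixPMF_symm_natAdd]; rfl
  simp only [h1, h2, ← Finset.mul_sum, hm₁, hm₂]
  rw [← add_mul, htu, one_mul]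

lemma mixPMF_isPMF (hp₁ : IsPMF ν₁) (hp₂ : IsPMF ν₂)
    (ht : 0 ≤ t) (hu : 0 ≤ u) (htu : t + u = 1) :
    IsPMF (mixPMF ν₁ ν₂ t u) := by
  constructor
  · intro w
    rcases h : (mixEquiv 𝒳 𝒴 n₁ n₂).symm w with s | s <;>
      simp only [mixPMF, h, Sum.elim_inl, Sum.elim_inr] <;>
      [exact mul_nonneg ht (hp₁.1 s); exact mul_nonneg hu (hp₂.1 s)]
  · have := Equiv.sum_comp (mixEquiv 𝒳 𝒴 n₁ n₂) (mixPMF ν₁ ν₂ t u)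
    rw [← this]
    rw [mixPMF_comp]
    rw [Fintype.sum_sum_type]
    simp only [Sum.elim_inl, Sum.elim_inr, ← Finset.mul_sum, hp₁.2, hp₂.2]
    linarith

lemma H_mixPMF_free {γ : Type*} [Fintype γ] (μ : 𝒳 × 𝒴 → ℝ)
    (hm₁ : ∀ a b, (∑ q, ν₁ (a, b, q)) = μ (a, b))
    (hm₂ : ∀ a b, (∑ q, ν₂ (a, b, q)) = μ (a, b))
    (htu : t + u = 1) (g : 𝒳 × 𝒴 → γ) :
    H (mixPMF ν₁ ν₂ t u) (fun w => g (w.1, w.2.1)) = H μ g :=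
  H_marg μ _ (mixPMF_marg ν₁ ν₂ t u μ hm₁ hm₂ htu) g

lemma H_mixPMF_q {γ : Type*} [Fintype γ]
    (h₁ : ∑ ω, ν₁ ω = 1) (h₂ : ∑ ω, ν₂ ω = 1) (g : 𝒳 × 𝒴 → γ) :
    H (mixPMF ν₁ ν₂ t u) (fun w => (g (w.1, w.2.1), w.2.2))
      = t * H ν₁ (fun w => (g (w.1, w.2.1), w.2.2))
        + u * H ν₂ (fun w => (g (w.1, w.2.1), w.2.2)) - Flog t - Flog u := by
  have hre := H_reindex (mixEquiv 𝒳 𝒴 n₁ n₂) (mixPMF ν₁ ν₂ t u)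
    (fun w => (g (w.1, w.2.1), w.2.2))
  rw [← hre]
  have hμ : (fun s => mixPMF ν₁ ν₂ t u ((mixEquiv 𝒳 𝒴 n₁ n₂) s))
      = Sum.elim (fun ω => t * ν₁ ω) (fun ω => u * ν₂ ω) := mixPMF_comp ν₁ ν₂ t u
  rw [hμ]
  -- express the composed random variable through an injection
  set eQ : ((γ × Fin n₁) ⊕ (γ × Fin n₂)) → γ × Fin (n₁ + n₂) :=
    Sum.elim (fun p => (p.1, Fin.castAdd n₂ p.2)) (fun p => (p.1, Fin.natAdd n₁ p.2)) with heQ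
  have heQinj : Function.Injective eQ := by
    rintro (⟨c, i⟩ | ⟨c, j⟩) (⟨c', i'⟩ | ⟨c', j'⟩) h <;>
      simp only [heQ, Sum.elim_inl, Sum.elim_inr, Prod.mk.injEq] at h
    · obtain ⟨h1, h2⟩ := h
      have : i = i' := by
        apply Fin.ext
        have := congrArg Fin.val h2
        simpa using this
      simp [h1, this]
    · exfalso
      have := congrArg Fin.val h.2
      simp at this
      omega
    · exfalso
      have := congrArg Fin.val h.2
      simp at this
      omega
    · obtain ⟨h1, h2⟩ := h
      have : j = j' := by
        apply Fin.ext
        have := congrArg Fin.val h2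
        simpa using this
      simp [h1, this]
  have hX : (fun s => (fun w => (g (w.1, w.2.1), w.2.2)) ((mixEquiv 𝒳 𝒴 n₁ n₂) s))
      = fun s => eQ ((Sum.elim (fun w => Sum.inl (g (w.1, w.2.1), w.2.2))
          (fun w => Sum.inr (g (w.1, w.2.1), w.2.2)) : _ → (γ × Fin n₁) ⊕ (γ × Fin n₂)) s) := by
    funext s
    rcases s with ⟨a, b, i⟩ | ⟨a, b, j⟩ <;> rfl
  rw [hX, H_comp_inj _ _ eQ heQinj]
  exact H_sum_mix ν₁ ν₂ t u _ _ h₁ h₂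

end Mix
section CMI

variable {𝒳 𝒴 𝒬 : Type*} [Fintype 𝒳] [Fintype 𝒴] [Fintype 𝒬]
  (μ : 𝒳 × 𝒴 → ℝ) (ν : 𝒳 × 𝒴 × 𝒬 → ℝ)

lemma cmi1_eq (hm : ∀ a b, (∑ q, ν (a, b, q)) = μ (a, b)) :
    condMutInfo ν (fun w => w.2.1) (fun w => w.2.2) (fun w => w.1)
      = H μ (fun p => (p.2, p.1)) + H ν (fun w => (Prod.fst (w.1, w.2.1), w.2.2))
        - H ν (fun w => ((fun p : 𝒳 × 𝒴 => (p.2, p.1)) (w.1, w.2.1), w.2.2))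
        - H μ Prod.fst := by
  unfold condMutInfo
  have h1 : H ν (fun w => (w.2.1, w.1)) = H μ (fun p => (p.2, p.1)) :=
    H_marg μ ν hm (fun p => (p.2, p.1))
  have h2 : H ν (fun w => (w.2.2, w.1)) = H ν (fun w => (Prod.fst (w.1, w.2.1), w.2.2)) :=
    H_comp_inj ν (fun w => (w.1, w.2.2)) Prod.swap Prod.swap_injective
  have h3 : H ν (fun w => (w.2.1, w.2.2, w.1))
      = H ν (fun w => ((fun p : 𝒳 × 𝒴 => (p.2, p.1)) (w.1, w.2.1), w.2.2)) :=
    H_comp_inj ν (fun w => ((w.2.1, w.1), w.2.2))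
      (fun p => (p.1.1, p.2, p.1.2))
      (by rintro ⟨⟨x, y⟩, q⟩ ⟨⟨x', y'⟩, q'⟩ h
          simp only [Prod.mk.injEq] at h
          simp [h.1, h.2.1, h.2.2])
  have h4 : H ν (fun w => w.1) = H μ Prod.fst := H_marg μ ν hm Prod.fst
  linarith

lemma cmi2_eq (hm : ∀ a b, (∑ q, ν (a, b, q)) = μ (a, b)) :
    condMutInfo ν (fun w => w.1) (fun w => w.2.2) (fun w => w.2.1)
      = H μ id + H ν (fun w => (Prod.snd (w.1, w.2.1), w.2.2))
        - H ν (fun w => (id (w.1, w.2.1), w.2.2)) - H μ Prod.snd := by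
  unfold condMutInfo
  have h1 : H ν (fun w => (w.1, w.2.1)) = H μ id := H_marg μ ν hm id
  have h2 : H ν (fun w => (w.2.2, w.2.1)) = H ν (fun w => (Prod.snd (w.1, w.2.1), w.2.2)) :=
    H_comp_inj ν (fun w => (w.2.1, w.2.2)) Prod.swap Prod.swap_injective
  have h3 : H ν (fun w => (w.1, w.2.2, w.2.1)) = H ν (fun w => (id (w.1, w.2.1), w.2.2)) :=
    H_comp_inj ν (fun w => ((w.1, w.2.1), w.2.2))
      (fun p => (p.1.1, p.2, p.1.2))
      (by rintro ⟨⟨x, y⟩, q⟩ ⟨⟨x', y'⟩, q'⟩ h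
          simp only [Prod.mk.injEq] at h
          simp [h.1, h.2.1, h.2.2])
  have h4 : H ν (fun w => w.2.1) = H μ Prod.snd := H_marg μ ν hm Prod.snd
  linarith

lemma cmi3_eq :
    condMutInfo ν (fun w => w.1) (fun w => w.2.1) (fun w => w.2.2)
      = H ν (fun w => (Prod.fst (w.1, w.2.1), w.2.2))
        + H ν (fun w => (Prod.snd (w.1, w.2.1), w.2.2))
        - H ν (fun w => (id (w.1, w.2.1), w.2.2))
        - H ν (fun w => ((fun _ : 𝒳 × 𝒴 => ()) (w.1, w.2.1), w.2.2)) := by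
  unfold condMutInfo
  have h3 : H ν (fun w => (w.1, w.2.1, w.2.2)) = H ν (fun w => (id (w.1, w.2.1), w.2.2)) :=
    H_comp_inj ν (fun w => ((w.1, w.2.1), w.2.2))
      (fun p => (p.1.1, p.1.2, p.2))
      (by rintro ⟨⟨x, y⟩, q⟩ ⟨⟨x', y'⟩, q'⟩ h
          simp only [Prod.mk.injEq] at h
          simp [h.1, h.2.1, h.2.2])
  have h4 : H ν (fun w => w.2.2)
      = H ν (fun w => ((fun _ : 𝒳 × 𝒴 => ()) (w.1, w.2.1), w.2.2)) :=
    H_comp_inj ν (fun w => (((), w.2.2) : Unit × 𝒬)) Prod.snd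
      (by rintro ⟨⟨⟩, q⟩ ⟨⟨⟩, q'⟩ h
          simpa using h)
  linarith

end CMI
section MixCMI

variable {𝒳 𝒴 : Type} [Fintype 𝒳] [Fintype 𝒴] {n₁ n₂ : ℕ}
  (ν₁ : 𝒳 × 𝒴 × Fin n₁ → ℝ) (ν₂ : 𝒳 × 𝒴 × Fin n₂ → ℝ) (t u : ℝ) (μ : 𝒳 × 𝒴 → ℝ)

lemma cmi_mix1 (hp₁ : IsPMF ν₁) (hp₂ : IsPMF ν₂)
    (hm₁ : ∀ a b, (∑ q, ν₁ (a, b, q)) = μ (a, b))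
    (hm₂ : ∀ a b, (∑ q, ν₂ (a, b, q)) = μ (a, b)) (htu : t + u = 1) :
    condMutInfo (mixPMF ν₁ ν₂ t u) (fun w => w.2.1) (fun w => w.2.2) (fun w => w.1)
      = t * condMutInfo ν₁ (fun w => w.2.1) (fun w => w.2.2) (fun w => w.1)
        + u * condMutInfo ν₂ (fun w => w.2.1) (fun w => w.2.2) (fun w => w.1) := by
  have A := cmi1_eq μ (mixPMF ν₁ ν₂ t u) (mixPMF_marg ν₁ ν₂ t u μ hm₁ hm₂ htu)
  have B := cmi1_eq μ ν₁ hm₁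
  have C := cmi1_eq μ ν₂ hm₂
  have D := H_mixPMF_q ν₁ ν₂ t u hp₁.2 hp₂.2 (Prod.fst : 𝒳 × 𝒴 → 𝒳)
  have E := H_mixPMF_q ν₁ ν₂ t u hp₁.2 hp₂.2 (fun p : 𝒳 × 𝒴 => (p.2, p.1))
  linear_combination A - t * B - u * C + D - E
    + (H μ Prod.fst - H μ (fun p : 𝒳 × 𝒴 => (p.2, p.1))) * htu

lemma cmi_mix2 (hp₁ : IsPMF ν₁) (hp₂ : IsPMF ν₂)
    (hm₁ : ∀ a b, (∑ q, ν₁ (a, b, q)) = μ (a, b))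
    (hm₂ : ∀ a b, (∑ q, ν₂ (a, b, q)) = μ (a, b)) (htu : t + u = 1) :
    condMutInfo (mixPMF ν₁ ν₂ t u) (fun w => w.1) (fun w => w.2.2) (fun w => w.2.1)
      = t * condMutInfo ν₁ (fun w => w.1) (fun w => w.2.2) (fun w => w.2.1)
        + u * condMutInfo ν₂ (fun w => w.1) (fun w => w.2.2) (fun w => w.2.1) := by
  have A := cmi2_eq μ (mixPMF ν₁ ν₂ t u) (mixPMF_marg ν₁ ν₂ t u μ hm₁ hm₂ htu)
  have B := cmi2_eq μ ν₁ hm₁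
  have C := cmi2_eq μ ν₂ hm₂
  have D := H_mixPMF_q ν₁ ν₂ t u hp₁.2 hp₂.2 (Prod.snd : 𝒳 × 𝒴 → 𝒴)
  have E := H_mixPMF_q ν₁ ν₂ t u hp₁.2 hp₂.2 (id : 𝒳 × 𝒴 → 𝒳 × 𝒴)
  linear_combination A - t * B - u * C + D - E
    + (H μ Prod.snd - H μ (id : 𝒳 × 𝒴 → 𝒳 × 𝒴)) * htu

lemma cmi_mix3 (hp₁ : IsPMF ν₁) (hp₂ : IsPMF ν₂) :
    condMutInfo (mixPMF ν₁ ν₂ t u) (fun w => w.1) (fun w => w.2.1) (fun w => w.2.2)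
      = t * condMutInfo ν₁ (fun w => w.1) (fun w => w.2.1) (fun w => w.2.2)
        + u * condMutInfo ν₂ (fun w => w.1) (fun w => w.2.1) (fun w => w.2.2) := by
  have A := cmi3_eq (mixPMF ν₁ ν₂ t u)
  have B := cmi3_eq ν₁
  have C := cmi3_eq ν₂
  have D := H_mixPMF_q ν₁ ν₂ t u hp₁.2 hp₂.2 (Prod.fst : 𝒳 × 𝒴 → 𝒳)
  have E := H_mixPMF_q ν₁ ν₂ t u hp₁.2 hp₂.2 (Prod.snd : 𝒳 × 𝒴 → 𝒴)
  have F := H_mixPMF_q ν₁ ν₂ t u hp₁.2 hp₂.2 (id : 𝒳 × 𝒴 → 𝒳 × 𝒴)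
  have G := H_mixPMF_q ν₁ ν₂ t u hp₁.2 hp₂.2 (fun _ : 𝒳 × 𝒴 => ())
  linear_combination A - t * B - u * C + D + E - F - G

end MixCMI


/-- the tension region `𝔗(X;Y)` is a convex subset of `ℝ₊³`. -/
theorem rtens_convex {𝒳 𝒴 : Type} [Fintype 𝒳] [Fintype 𝒴]
    (μ : 𝒳 × 𝒴 → ℝ) (hμ : IsPMF μ) :
    Convex ℝ (Rtens μ) := by
  intro x hx y hy t u ht hu htu
  obtain ⟨hx1, hx2, hx3, n₁, ν₁, hp₁, hm₁, hI11, hI12, hI13⟩ := hx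
  obtain ⟨hy1, hy2, hy3, n₂, ν₂, hp₂, hm₂, hI21, hI22, hI23⟩ := hy
  refine ⟨?_, ?_, ?_, n₁ + n₂, mixPMF ν₁ ν₂ t u,
    mixPMF_isPMF ν₁ ν₂ t u hp₁ hp₂ ht hu htu,
    mixPMF_marg ν₁ ν₂ t u μ hm₁ hm₂ htu, ?_, ?_, ?_⟩
  · simp only [Prod.fst_add, Prod.smul_fst, smul_eq_mul]
    exact add_nonneg (mul_nonneg ht hx1) (mul_nonneg hu hy1)
  · simp only [Prod.snd_add, Prod.smul_snd, Prod.fst_add, Prod.smul_fst, smul_eq_mul]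
    exact add_nonneg (mul_nonneg ht hx2) (mul_nonneg hu hy2)
  · simp only [Prod.snd_add, Prod.smul_snd, smul_eq_mul]
    exact add_nonneg (mul_nonneg ht hx3) (mul_nonneg hu hy3)
  · rw [cmi_mix1 ν₁ ν₂ t u μ hp₁ hp₂ hm₁ hm₂ htu]
    simp only [Prod.fst_add, Prod.smul_fst, smul_eq_mul]
    exact add_le_add (mul_le_mul_of_nonneg_left hI11 ht) (mul_le_mul_of_nonneg_left hI21 hu)
  · rw [cmi_mix2 ν₁ ν₂ t u μ hp₁ hp₂ hm₁ hm₂ htu]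
    simp only [Prod.snd_add, Prod.smul_snd, Prod.fst_add, Prod.smul_fst, smul_eq_mul]
    exact add_le_add (mul_le_mul_of_nonneg_left hI12 ht) (mul_le_mul_of_nonneg_left hI22 hu)
  · rw [cmi_mix3 ν₁ ν₂ t u hp₁ hp₂]
    simp only [Prod.snd_add, Prod.smul_snd, smul_eq_mul]
    exact add_le_add (mul_le_mul_of_nonneg_left hI13 ht) (mul_le_mul_of_nonneg_left hI23 hu)


end Paper
end
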